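/- Let G be an interval graph given by an interval representation {[a_v, b_v]}_{v ∈ V} with all endpoints distinct, and let χ be a proper vertex coloring of G with c colors. Order the vertices by increasing right endpoints b_v, and assign each edge to the page given by the color of its right endpoint in this ordering. Then for every edge-weight function w, this is a valid PQ-layout with c pages; in particular, every graph of pathwidth at most p satisfies pqn(G) ≤ p + 1. -/

import Mathlib

/-!
Order the vertices by right endpoints and put each edge on the page of the colour of its right
endpoint. If `u'v'` is an edge and `u' ≺ v ≺ v'`, then the interval of `v'` starts before `b u'`,
hence before `b v`, and ends after `b v`; so `v` and `v'` are adjacent and the edges `uv`, `u'v'`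
lie on different pages. A forbidden configuration therefore never occurs, whatever the weights.

For pathwidth `p`, a vertex lives in an interval of consecutive bags, so `G` is a subgraph of an
interval graph in which every point lies in at most `p + 1` intervals; colouring greedily by left
endpoints uses `p + 1` colours. Ties between right endpoints may be broken arbitrarily, since the
argument above only needs `b v ≤ b v'`.
-/

open Finset Function

variable {V α β P R : Type*}

/-- `f` is the vertex ordering and `page u v` the page of the edge `uv`. -/
def IsPQLayout [LT β] [LE R] (G : SimpleGraph V) (f : V → β) (page : V → V → P)
    (w : V → V → R) : Prop :=
  ∀ u v u' v', G.Adj u v → G.Adj u' v' → page u v = page u' v' →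
    f u < f v → f u' < f v' → f u' < f v → f v < f v' → w u v ≤ w u' v'

theorem isPQLayout_of_forall_adj_ne [Preorder β] [LE R] {G : SimpleGraph V} {f : V → β}
    {χ : V → P} (h : ∀ u' v v', G.Adj u' v' → f u' < f v → f v < f v' → χ v ≠ χ v')
    (w : V → V → R) : IsPQLayout G f (fun _ v => χ v) w :=
  fun _ _ _ _ _ hadj hpage _ _ h₁ h₂ => absurd hpage (h _ _ _ hadj h₁ h₂)

theorem SimpleGraph.colorable_succ_of_card_earlier_adj_le [Fintype V] [LinearOrder α]
    (G : SimpleGraph V) [DecidableRel G.Adj] (r : V → α) {k : ℕ}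
    (h : ∀ v, #{u | G.Adj u v ∧ r u ≤ r v} ≤ k) : G.Colorable (k + 1) := by
  classical
  suffices ∀ s : Finset V, ∃ χ : V → Fin (k + 1), ∀ u ∈ s, ∀ v ∈ s, G.Adj u v → χ u ≠ χ v by
    obtain ⟨χ, hχ⟩ := this univ
    exact ⟨.mk χ fun huv => hχ _ (mem_univ _) _ (mem_univ _) huv⟩
  intro s
  induction s using Finset.induction_on_max_value r with
  | empty => exact ⟨fun _ => 0, by simp⟩
  | insert a s ha hmax ih =>
    obtain ⟨χ, hχ⟩ := ih
    have hfree : #(image χ {u | G.Adj u a ∧ r u ≤ r a}) < #(univ : Finset (Fin (k + 1))) := by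
      rw [card_univ, Fintype.card_fin]
      exact Nat.lt_succ_of_le (card_image_le.trans (h a))
    obtain ⟨c, -, hc⟩ := exists_mem_notMem_of_card_lt_card hfree
    have hc' : ∀ u ∈ s, G.Adj u a → χ u ≠ c := fun u hu hadj hcol =>
      hc (mem_image.2 ⟨u, by simp [hadj, hmax u hu], hcol⟩)
    refine ⟨update χ a c, fun u hu v hv hadj => ?_⟩
    rcases mem_insert.1 hu with rfl | hus <;> rcases mem_insert.1 hv with rfl | hvs
    · exact absurd hadj G.irrefl
    · rw [update_self, update_of_ne (G.ne_of_adj hadj).symm]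
      exact (hc' v hvs hadj.symm).symm
    · rw [update_self, update_of_ne (G.ne_of_adj hadj)]
      exact hc' u hus hadj
    · rw [update_of_ne (hus.ne_of_notMem ha), update_of_ne (hvs.ne_of_notMem ha)]
      exact hχ u hus v hvs hadj

section IntervalGraph

variable [LinearOrder α]

def intervalGraph (a b : V → α) : SimpleGraph V where
  Adj u v := u ≠ v ∧ a u ≤ b v ∧ a v ≤ b u
  symm := ⟨fun _ _ h => ⟨h.1.symm, h.2.2, h.2.1⟩⟩
  loopless := ⟨fun _ h => h.1 rfl⟩

@[simp]
theorem intervalGraph_adj {a b : V → α} {u v : V} :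
    (intervalGraph a b).Adj u v ↔ u ≠ v ∧ a u ≤ b v ∧ a v ≤ b u :=
  Iff.rfl

theorem intervalGraph_adj_of_le {a b : V → α} {u' v v' : V} (hv : a v ≤ b v) (hne : v ≠ v')
    (hv' : a v' ≤ b u') (h₁ : b u' ≤ b v) (h₂ : b v ≤ b v') : (intervalGraph a b).Adj v v' :=
  intervalGraph_adj.2 ⟨hne, hv.trans h₂, hv'.trans h₁⟩

theorem isPQLayout_of_le_intervalGraph [Preorder β] [LE R] {a b : V → α} (hab : ∀ v, a v ≤ b v)
    {G : SimpleGraph V} (hG : G ≤ intervalGraph a b) {f : V → β}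
    (hf : ∀ u v, f u < f v → b u ≤ b v) (C : (intervalGraph a b).Coloring P) (w : V → V → R) :
    IsPQLayout G f (fun _ v => C v) w := by
  refine isPQLayout_of_forall_adj_ne (fun u' v v' hadj h₁ h₂ => C.valid ?_) w
  exact intervalGraph_adj_of_le (hab v) (ne_of_apply_ne f h₂.ne)
    (intervalGraph_adj.1 (hG hadj)).2.2 (hf _ _ h₁) (hf _ _ h₂)

theorem intervalGraph_colorable [Fintype V] {a b : V → α} (hab : ∀ v, a v ≤ b v) {k : ℕ}
    (h : ∀ x, #{u | a u ≤ x ∧ x ≤ b u} ≤ k + 1) : (intervalGraph a b).Colorable (k + 1) := by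
  classical
  -- an earlier neighbour of `v`, in the order of left endpoints, contains the point `a v`
  refine (intervalGraph a b).colorable_succ_of_card_earlier_adj_le a fun v => ?_
  have hsub : ({u | (intervalGraph a b).Adj u v ∧ a u ≤ a v} : Finset V) ⊆
      ({u | a u ≤ a v ∧ a v ≤ b u} : Finset V).erase v := fun u hu => by
    simp only [mem_filter, mem_univ, true_and, mem_erase, intervalGraph_adj] at hu ⊢
    exact ⟨hu.1.1, hu.2, hu.1.2.2⟩
  calc _ ≤ #(({u | a u ≤ a v ∧ a v ≤ b u} : Finset V).erase v) := card_le_card hsub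
    _ = #({u | a u ≤ a v ∧ a v ≤ b u} : Finset V) - 1 := card_erase_of_mem (by simp [hab v])
    _ ≤ k := by have := h (a v); omega

end IntervalGraph

theorem Finset.mem_iff_min'_le_and_le_max' [LinearOrder α] {s : Finset α} (hs : s.Nonempty)
    (hconv : (s : Set α).OrdConnected) (j : α) : j ∈ s ↔ s.min' hs ≤ j ∧ j ≤ s.max' hs :=
  ⟨fun hj => ⟨s.min'_le j hj, s.le_max' j hj⟩,
    fun hj => hconv.out (s.min'_mem hs) (s.max'_mem hs) hj⟩

theorem exists_interval_of_path_decomposition [Fintype α] [LinearOrder α] (bags : α → Finset V)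
    (hcover : ∀ v, ∃ i, v ∈ bags i)
    (hconvex : ∀ v (i j l : α), i ≤ j → j ≤ l → v ∈ bags i → v ∈ bags l → v ∈ bags j) :
    ∃ a b : V → α, ∀ v i, v ∈ bags i ↔ a v ≤ i ∧ i ≤ b v := by
  classical
  have hne : ∀ v, ({i | v ∈ bags i} : Finset α).Nonempty := fun v =>
    let ⟨i, hi⟩ := hcover v; ⟨i, by simpa using hi⟩
  refine ⟨fun v => min' _ (hne v), fun v => max' _ (hne v), fun v i => ?_⟩
  have hconv : (({i | v ∈ bags i} : Finset α) : Set α).OrdConnected :=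
    ⟨fun i hi l hl j hj => by
      simp only [coe_filter, mem_univ, true_and, Set.mem_ofPred_eq] at hi hl ⊢
      exact hconvex v i j l hj.1 hj.2 hi hl⟩
  rw [← mem_iff_min'_le_and_le_max' (hne v) hconv, mem_filter]
  simp

theorem exists_injective_lt_imp_le [Fintype V] (g : V → ℕ) :
    ∃ f : V → ℕ, Injective f ∧ ∀ u v, f u < f v → g u ≤ g v := by
  let e := Fintype.equivFin V
  refine ⟨fun v => Fintype.card V * g v + e v, fun u v huv => ?_, fun u v huv => ?_⟩
  · have hmod := congrArg (· % Fintype.card V) huv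
    simp only [Nat.mul_add_mod, Nat.mod_eq_of_lt (e u).isLt, Nat.mod_eq_of_lt (e v).isLt] at hmod
    exact e.injective (Fin.ext hmod)
  · have hn : 0 < Fintype.card V := Fintype.card_pos_iff.2 ⟨u⟩
    have hdiv := Nat.div_le_div_right (c := Fintype.card V) huv.le
    rwa [Nat.mul_add_div hn, Nat.mul_add_div hn, Nat.div_eq_of_lt (e _).isLt,
      Nat.div_eq_of_lt (e _).isLt, add_zero, add_zero] at hdiv

/-- **Interval graphs, proper colorings and PQ-layouts; pathwidth bound.**
(1) Let `G` be the interval graph of intervals `[a v, b v]` with pairwise distinct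
right endpoints, and let `χ` be a proper coloring with `c` colors.  Ordering the
vertices by increasing right endpoint `b` and assigning each edge the color of its
right endpoint yields, for *every* edge-weight function `w`, a valid PQ-layout with
`c` pages (no page contains a forbidden configuration).
(2) Consequently, every graph of pathwidth at most `p` (witnessed by a path
decomposition with bags of size at most `p + 1`) satisfies `pqn(G) ≤ p + 1`. -/
theorem interval_coloring_layout_and_pathwidth :
    (∀ (V : Type) (a b : V → ℝ) (c : ℕ) (χ : V → Fin c),
      (∀ v, a v < b v) →
      (∀ u v, u ≠ v → b u ≠ b v) →
      (∀ u v, u ≠ v → a u ≤ b v → a v ≤ b u → χ u ≠ χ v) →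
      ∀ (w : V → V → ℝ) (u v u' v' : V),
        (u ≠ v ∧ a u ≤ b v ∧ a v ≤ b u) →
        (u' ≠ v' ∧ a u' ≤ b v' ∧ a v' ≤ b u') →
        b u < b v → b u' < b v' → χ v = χ v' →
        b u' < b v → b v < b v' →
        w u v ≤ w u' v') ∧
    (∀ (V : Type) [Fintype V] [DecidableEq V] (G : SimpleGraph V) (p t : ℕ)
      (bags : Fin t → Finset V),
      (∀ i, (bags i).card ≤ p + 1) →
      (∀ v, ∃ i, v ∈ bags i) →
      (∀ u v, G.Adj u v → ∃ i, u ∈ bags i ∧ v ∈ bags i) →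
      (∀ v (i j l : Fin t), i ≤ j → j ≤ l → v ∈ bags i → v ∈ bags l → v ∈ bags j) →
      ∀ w : V → V → ℝ,
        ∃ (f : V → ℕ) (page : V → V → Fin (p + 1)),
          Function.Injective f ∧
          ∀ u v u' v', G.Adj u v → G.Adj u' v' →
            page u v = page u' v' →
            f u < f v → f u' < f v' → f u' < f v → f v < f v' →
            w u v ≤ w u' v') := by
  refine ⟨fun V a b c χ hab _ hproper w u v u' v' huv hu'v' h₁ h₂ hpage h₃ h₄ => ?_,
    fun V _ _ G p t bags hcard hcover hedge hconvex w => ?_⟩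
  · let C : (intervalGraph a b).Coloring (Fin c) :=
      .mk χ fun h => let ⟨hne, h₁, h₂⟩ := intervalGraph_adj.1 h; hproper _ _ hne h₁ h₂
    exact isPQLayout_of_le_intervalGraph (fun v => (hab v).le) le_rfl (fun _ _ => le_of_lt) C w
      u v u' v' (intervalGraph_adj.2 huv) (intervalGraph_adj.2 hu'v') hpage h₁ h₂ h₃ h₄
  · obtain ⟨a, b, hbags⟩ := exists_interval_of_path_decomposition bags hcover hconvex
    have hab : ∀ v, a v ≤ b v := fun v =>
      let ⟨i, hi⟩ := hcover v; ((hbags v i).1 hi).1.trans ((hbags v i).1 hi).2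
    have hG : G ≤ intervalGraph a b := fun u v huv => by
      obtain ⟨i, hu, hv⟩ := hedge u v huv
      rw [hbags] at hu hv
      exact intervalGraph_adj.2 ⟨G.ne_of_adj huv, hu.1.trans hv.2, hv.1.trans hu.2⟩
    obtain ⟨C⟩ := intervalGraph_colorable hab fun i =>
      (card_le_card fun u hu => (hbags u i).2 (mem_filter.1 hu).2).trans (hcard i)
    obtain ⟨f, hf_inj, hf⟩ := exists_injective_lt_imp_le fun v => (b v : ℕ)
    exact ⟨f, fun _ v => C v, hf_inj, isPQLayout_of_le_intervalGraph hab hG hf C w⟩
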